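/- arXiv:2508.05144 — 2 statements merged into one kernel-verified Lean document; each statement's English description precedes it below -/
import Mathlib

section
/- (Theorem 1 of the paper, deterministic core: the limiting weight proportion decreases with the dropout rate.) Let β_1, …, β_{n'} ∈ ℝ with β_1 ≠ 0, and let ρ_1, …, ρ_{n'} satisfy ρ_1 = 1 and 0 ≤ ρ_i ≤ 1 for all i. For γ₀ ∈ [0,1), set d_i = ρ_i γ₀, p_i = 1 − d_i, β̃_i = p_i β_i, and define the proportion r(γ₀) = |β̃_1| / Σ_{i=1}^{n'} |β̃_i| = (1 − γ₀)|β_1| / Σ_{i=1}^{n'} (1 − ρ_i γ₀)|β_i|. Then r is monotonically non-increasing on [0,1); moreover, if there exists an index i with ρ_i < 1 and β_i ≠ 0, then r is strictly decreasing on [0,1). -/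
/-- Theorem 1 (deterministic core): with fixed ensemble weights `β i` (`β 1 ≠ 0`), relative
dropout factors `ρ i` (`ρ 1 = 1`, `0 ≤ ρ i ≤ 1`), retention probabilities `p i = 1 − ρ i * γ₀`,
and limiting absolute average weights `|p i * β i|`, the proportion
`r γ₀ = (1 − γ₀) * |β 1| / ∑ i, (1 − ρ i * γ₀) * |β i|` is monotonically non-increasing in the
dropout rate `γ₀` on `[0,1)`; it is strictly decreasing whenever some index has `ρ i < 1` and
`β i ≠ 0`. -/
theorem dropout_weight_proportion_antitone
    {n' : ℕ} (hn : 0 < n') (β ρ : Fin n' → ℝ)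
    (hβ1 : β ⟨0, hn⟩ ≠ 0)
    (hρ1 : ρ ⟨0, hn⟩ = 1)
    (hρ : ∀ i, 0 ≤ ρ i ∧ ρ i ≤ 1)
    (r : ℝ → ℝ)
    (hr : ∀ γ₀, r γ₀ = ((1 - γ₀) * |β ⟨0, hn⟩|) / ∑ i, (1 - ρ i * γ₀) * |β i|) :
    AntitoneOn r (Set.Ico (0 : ℝ) 1) ∧
    ((∃ i, ρ i < 1 ∧ β i ≠ 0) → StrictAntiOn r (Set.Ico (0 : ℝ) 1)) := by
  have hA : (0:ℝ) < |β ⟨0, hn⟩| := abs_pos.mpr hβ1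
  have hSpos : ∀ γ ∈ Set.Ico (0:ℝ) 1, 0 < ∑ i, (1 - ρ i * γ) * |β i| := by
    intro γ hγ
    obtain ⟨hγ0, hγ1⟩ := hγ
    apply Finset.sum_pos'
    · intro i _
      obtain ⟨h1, h2⟩ := hρ i
      have : ρ i * γ ≤ 1 := by nlinarith
      exact mul_nonneg (by linarith) (abs_nonneg _)
    · exact ⟨⟨0, hn⟩, Finset.mem_univ _, by rw [hρ1]; nlinarith⟩
  refine ⟨?_, ?_⟩
  · intro x hx y hy hxy
    rw [hr x, hr y]
    rw [div_le_div_iff₀ (hSpos y hy) (hSpos x hx)]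
    have key : (1 - y) * ∑ i, (1 - ρ i * x) * |β i| ≤
        (1 - x) * ∑ i, (1 - ρ i * y) * |β i| := by
      rw [Finset.mul_sum, Finset.mul_sum]
      apply Finset.sum_le_sum
      intro i _
      obtain ⟨h1, h2⟩ := hρ i
      nlinarith [abs_nonneg (β i), mul_nonneg (mul_nonneg (by linarith : (0:ℝ) ≤ y - x)
        (by linarith : (0:ℝ) ≤ 1 - ρ i)) (abs_nonneg (β i))]
    nlinarith [mul_le_mul_of_nonneg_right key hA.le]
  · rintro ⟨j, hj1, hj2⟩ x hx y hy hxy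
    rw [hr x, hr y]
    rw [div_lt_div_iff₀ (hSpos y hy) (hSpos x hx)]
    have key : (1 - y) * ∑ i, (1 - ρ i * x) * |β i| <
        (1 - x) * ∑ i, (1 - ρ i * y) * |β i| := by
      rw [Finset.mul_sum, Finset.mul_sum]
      apply Finset.sum_lt_sum
      · intro i _
        obtain ⟨h1, h2⟩ := hρ i
        nlinarith [abs_nonneg (β i), mul_nonneg (mul_nonneg (by linarith : (0:ℝ) ≤ y - x)
          (by linarith : (0:ℝ) ≤ 1 - ρ i)) (abs_nonneg (β i))]
      · refine ⟨j, Finset.mem_univ _, ?_⟩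
        obtain ⟨h1, h2⟩ := hρ j
        have hb : (0:ℝ) < |β j| := abs_pos.mpr hj2
        nlinarith [mul_pos (mul_pos (by linarith : (0:ℝ) < y - x)
          (by linarith : (0:ℝ) < 1 - ρ j)) hb]
    nlinarith [mul_lt_mul_of_pos_right key hA]
end

section
/- (Theorem 1 of the paper, probabilistic form: almost-sure limit of the weight proportion under repeated dropout sampling.) Let x_1, …, x_{n'} be pairwise orthogonal nonzero vectors in ℝ^m, let y ∈ ℝ^m, and let β* be the OLS coefficient vector with β*_1 ≠ 0. Fix γ₀ ∈ [0,1) and ρ_1, …, ρ_{n'} with ρ_1 = 1 and 0 ≤ ρ_i ≤ 1, and set retention probabilities p_i = 1 − ρ_i γ₀. Let S^{(1)}, S^{(2)}, … be an i.i.d. sequence of dropout samples with retention probabilities p_1, …, p_{n'}, and define β̄_i^{(N)} = (1/N) Σ_{n=1}^N β̂(S^{(n)})_i. Then the proportion |β̄_1^{(N)}| / Σ_{i=1}^{n'} |β̄_i^{(N)}| converges almost surely, as N → ∞, to r(γ₀) = p_1 |β*_1| / Σ_{i=1}^{n'} p_i |β*_i|. -/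
open scoped RealInnerProductSpace
open MeasureTheory ProbabilityTheory Filter

/-! By the strong law of large numbers, applied to each coordinate, `β̄ i N` converges almost
surely to `p i * βstar i`; the proportion is a continuous function of these averages wherever
the denominator is nonzero, and the limiting denominator is positive because `p 0 > 0` and
`βstar 0 ≠ 0`. -/

section StrongLaw

variable {Ω α : Type*} [MeasurableSpace Ω] {μ : Measure Ω} [MeasurableSpace α]

theorem integral_indicator_const_comp {X : Ω → α} (hX : AEMeasurable X μ) {s : Set α}
    (hs : MeasurableSet s) (c : ℝ) :
    ∫ ω, s.indicator (fun _ => c) (X ω) ∂μ = μ.real (X ⁻¹' s) * c := by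
  rw [← integral_map hX (by fun_prop), integral_indicator_const _ hs, smul_eq_mul,
    map_measureReal_apply_of_aemeasurable hX hs]

theorem ae_tendsto_average_indicator_comp [IsProbabilityMeasure μ] {S : ℕ → Ω → α}
    (hindep : iIndepFun S μ) (hident : ∀ n, IdentDistrib (S n) (S 0) μ μ) {s : Set α}
    (hs : MeasurableSet s) (c : ℝ) :
    ∀ᵐ ω ∂μ, Tendsto (fun N : ℕ => (∑ n ∈ Finset.range N, s.indicator (fun _ => c) (S n ω)) / N)
      atTop (nhds (μ.real (S 0 ⁻¹' s) * c)) := by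
  have hf : Measurable (s.indicator fun _ => c) := measurable_const.indicator hs
  have hS0 : AEMeasurable (S 0) μ := (hident 0).aemeasurable_fst
  have hint : Integrable (fun ω => s.indicator (fun _ => c) (S 0 ω)) μ :=
    (integrable_const c).indicator hs |>.comp_aemeasurable hS0
  have := strong_law_ae_real (fun n ω => s.indicator (fun _ => c) (S n ω)) hint
    (fun a b hab => (hindep.indepFun hab).comp hf hf) (fun n => (hident n).comp hf)
  rwa [integral_indicator_const_comp hS0 hs] at this

end StrongLaw

theorem Filter.Tendsto.abs_div_sum_abs {ι β : Type*} [Fintype ι] {l : Filter β} {u : ι → β → ℝ}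
    {a : ι → ℝ} (hu : ∀ i, Tendsto (u i) l (nhds (a i))) (ha : ∑ i, |a i| ≠ 0) (i₀ : ι) :
    Tendsto (fun b => |u i₀ b| / ∑ i, |u i b|) l (nhds (|a i₀| / ∑ i, |a i|)) :=
  (hu i₀).abs.div (tendsto_finsetSum _ fun i _ => (hu i).abs) ha

theorem dropout_weight_proportion_tendsto
    {m n' : ℕ} (hn : 0 < n')
    (βstar : Fin n' → ℝ)
    (hβ1 : βstar ⟨0, hn⟩ ≠ 0)
    (γ₀ : ℝ) (hγ₀ : γ₀ ∈ Set.Ico (0 : ℝ) 1)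
    (ρ : Fin n' → ℝ) (hρ : ∀ i, 0 ≤ ρ i ∧ ρ i ≤ 1)
    (p : Fin n' → ℝ) (hp : ∀ i, p i = 1 - ρ i * γ₀)
    {Ω : Type*} [MeasurableSpace Ω] (μ : Measure Ω) [IsProbabilityMeasure μ]
    (S : ℕ → Ω → Finset (Fin n'))
    (hProb : ∀ n i, μ {ω | i ∈ S n ω} = ENNReal.ofReal (p i))
    -- the dropout samples form an independent, identically distributed sequence
    (hIndepSeq : iIndepFun (m := fun _ => (⊤ : MeasurableSpace (Finset (Fin n')))) S μ)
    (hIdent : ∀ n, @IdentDistrib Ω Ω (Finset (Fin n')) _ _ ⊤ (S n) (S 0) μ μ)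
    -- the average estimator
    (βbar : Fin n' → ℕ → Ω → ℝ)
    (hβbar : ∀ i N ω, βbar i N ω =
      (1 / (N : ℝ)) * ∑ n ∈ Finset.range N, (if i ∈ S n ω then βstar i else 0)) :
    ∀ᵐ ω ∂μ,
      Tendsto (fun N : ℕ => |βbar ⟨0, hn⟩ N ω| / ∑ i, |βbar i N ω|)
        atTop (nhds (p ⟨0, hn⟩ * |βstar ⟨0, hn⟩| / ∑ i, p i * |βstar i|)) := by
  let _ : MeasurableSpace (Finset (Fin n')) := ⊤
  have hp_pos (i : Fin n') : 0 < p i := by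
    nlinarith [hp i, (hρ i).2, hγ₀.1, hγ₀.2]
  have hβbar_tendsto (i : Fin n') :
      ∀ᵐ ω ∂μ, Tendsto (fun N => βbar i N ω) atTop (nhds (p i * βstar i)) := by
    have hmean : μ.real (S 0 ⁻¹' {s | i ∈ s}) = p i := by
      rw [measureReal_def, Set.preimage_ofPred_eq, hProb 0 i, ENNReal.toReal_ofReal (hp_pos i).le]
    filter_upwards [ae_tendsto_average_indicator_comp hIndepSeq hIdent
      (MeasurableSpace.measurableSet_top (s := {s | i ∈ s})) (βstar i)] with ω hω
    rw [hmean] at hω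
    convert hω using 2 with N
    simp only [hβbar, Set.indicator_apply, Set.mem_ofPred_eq]
    ring
  have habs (i : Fin n') : |p i * βstar i| = p i * |βstar i| := by
    rw [abs_mul, abs_of_pos (hp_pos i)]
  have hsum_pos : 0 < ∑ i, p i * |βstar i| :=
    Finset.sum_pos' (fun i _ => mul_nonneg (hp_pos i).le (abs_nonneg _))
      ⟨_, Finset.mem_univ _, mul_pos (hp_pos _) (abs_pos.2 hβ1)⟩
  filter_upwards [ae_all_iff.2 hβbar_tendsto] with ω hω
  simpa only [habs] using Tendsto.abs_div_sum_abs hω (by simpa only [habs] using hsum_pos.ne') _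
end
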